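/- Let a be an element of the semigroup S_m with normal form a = y^{j_0} x y^{j_1} x ⋯ y^{j_{t−1}} x y^{j_t}. Then the word length of a with respect to the generating set {x, y} equals t + j_0 + j_1 + ⋯ + j_t. -/

import Mathlib

/-- `j' ≺ j` : there is `k ≥ 1` with `j' < m k ≤ j`. -/
def mPrec (m : ℕ → ℕ) (j' j : ℕ) : Prop := ∃ k, 1 ≤ k ∧ j' < m k ∧ m k ≤ j

/-- `j' ⪯ j` : `j' ≺ j`, or `j` and `j'` lie in a common block `[m k, m (k+1))`. -/
def mPreceq (m : ℕ → ℕ) (j' j : ℕ) : Prop :=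
  mPrec m j' j ∨ ∃ k, 1 ≤ k ∧ m k ≤ j ∧ m k ≤ j' ∧ j < m (k+1) ∧ j' < m (k+1)

/-- The letter `x` (as a free monoid element over `Bool`, `true` = x). -/
def fmx : FreeMonoid Bool := FreeMonoid.of true
/-- The letter `y` (`false` = y). -/
def fmy : FreeMonoid Bool := FreeMonoid.of false

/-- The defining relations of `S_m` : `x² = x` and
`x yʲ x y^{j'} x = x yʲ x` whenever `j' ≺ j` (with `j, j' ≥ 1`). -/
def smRel (m : ℕ → ℕ) : FreeMonoid Bool → FreeMonoid Bool → Prop := fun u v =>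
  (u = fmx * fmx ∧ v = fmx) ∨
  ∃ j j', 1 ≤ j ∧ 1 ≤ j' ∧ mPrec m j' j ∧
    u = fmx * fmy ^ j * fmx * fmy ^ j' * fmx ∧ v = fmx * fmy ^ j * fmx

/-- The semigroup `S_m`. -/
abbrev SM (m : ℕ → ℕ) := (conGen (smRel m)).Quotient

/-- The word `y^{j₀} x y^{j₁} x ⋯ y^{j_{t-1}} x y^{j_t}` associated to the
exponent list `[j₀, j₁, …, j_t]` (one `x` between consecutive exponents). -/
def nfWord : List ℕ → FreeMonoid Bool
  | [] => 1
  | [j] => fmy ^ j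
  | j :: rest => fmy ^ j * fmx * nfWord rest

/-- `l = [j₀, …, j_t]` is a valid normal form: nonempty, the interior exponents
`j₁, …, j_{t-1}` are `≥ 1` and form a `⪯`-nondecreasing chain. -/
def isNF (m : ℕ → ℕ) (l : List ℕ) : Prop :=
  l ≠ [] ∧ (∀ j ∈ l.tail.dropLast, 1 ≤ j) ∧ l.tail.dropLast.Chain' (mPreceq m)

/-- Word length in `S_m` with respect to the generating set `{x, y}`. -/
noncomputable def smLen (m : ℕ → ℕ) (a : SM m) : ℕ :=
  sInf {k : ℕ | ∃ w : FreeMonoid Bool, w.length = k ∧ (conGen (smRel m)).mk' w = a}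

/-!
Reading a word letter by letter, one can maintain the normal form of the prefix read so far:
`y` raises the last exponent, and `x` either is absorbed (by `x² = x`, or by
`x y^d x y^j x = x y^d x` when `j ≺ d`) or opens a new exponent. Since this procedure respects
the defining relations, it computes a function on `S_m`, and on a normal form word it just
returns that normal form. Each letter raises `t + j₀ + ⋯ + j_t` by at most one, so every word
representing `a` has at least that many letters, while the normal form word has exactly that
many.
-/

theorem mPrec_trans {m : ℕ → ℕ} {a b c : ℕ} (hab : mPrec m a b) (hbc : mPrec m b c) :
    mPrec m a c := by
  obtain ⟨k, -, hak, hkb⟩ := hab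
  obtain ⟨k', hk', hbk', hk'c⟩ := hbc
  exact ⟨k', hk', by omega, hk'c⟩

theorem not_mPrec_of_mPreceq {m : ℕ → ℕ} (hmono : ∀ k, 1 ≤ k → m k < m (k + 1)) {a b : ℕ}
    (h : mPreceq m a b) : ¬ mPrec m b a := by
  rintro ⟨k', hk', hbk', hk'a⟩
  rcases h with ⟨k, -, hak, hkb⟩ | ⟨k, hk, hkb, hka, hbk, hak⟩
  · omega
  · -- `m k ≤ b < m k' ≤ a < m (k + 1)` squeezes `k'` strictly between `k` and `k + 1`.
    have hshift : StrictMono fun i => m (i + 1) :=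
      strictMono_nat_of_lt_succ fun i => hmono (i + 1) (by omega)
    obtain ⟨k, rfl⟩ : ∃ i, k = i + 1 := ⟨k - 1, by omega⟩
    obtain ⟨k', rfl⟩ : ∃ i, k' = i + 1 := ⟨k' - 1, by omega⟩
    have h₁ : k < k' := hshift.lt_iff_lt.mp (show m (k + 1) < m (k' + 1) by omega)
    have h₂ : k' < k + 1 := hshift.lt_iff_lt.mp (show m (k' + 1) < m (k + 1 + 1) by omega)
    omega

namespace SM

variable (m : ℕ → ℕ)

/- A state `[j_t, …, j₁, j₀]` is the exponent list of a normal form, reversed so that the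
exponent currently being read is the head; `[]` is an absorbing junk state. -/

open Classical in
noncomputable def stepX : List ℕ → List ℕ
  | [] => []
  | [j] => [0, j]
  | 0 :: d :: T => 0 :: d :: T
  | [j + 1, d] => [0, j + 1, d]
  | (j + 1) :: d :: e :: T =>
      if mPrec m (j + 1) d then 0 :: d :: e :: T else 0 :: (j + 1) :: d :: e :: T

def stepY : List ℕ → List ℕ
  | [] => []
  | j :: T => (j + 1) :: T

noncomputable def step (L : List ℕ) : Bool → List ℕ
  | true => stepX m L
  | false => stepY L

noncomputable def run (L : List ℕ) (w : FreeMonoid Bool) : List ℕ :=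
  w.toList.foldl (step m) L

theorem run_mul (L : List ℕ) (u v : FreeMonoid Bool) :
    run m L (u * v) = run m (run m L u) v := by
  simp [run, List.foldl_append]

theorem run_of (L : List ℕ) (b : Bool) : run m L (FreeMonoid.of b) = step m L b := rfl

theorem run_fmx (L : List ℕ) : run m L fmx = stepX m L := rfl

theorem run_fmy (L : List ℕ) : run m L fmy = stepY L := rfl

theorem run_nil (w : FreeMonoid Bool) : run m [] w = [] := by
  have step_nil (b : Bool) : step m [] b = [] := by cases b <;> rfl
  unfold run
  induction w.toList with
  | nil => rfl
  | cons b bs ih => rwa [List.foldl_cons, step_nil]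

theorem run_fmy_pow (a j : ℕ) (T : List ℕ) : run m (a :: T) (fmy ^ j) = (a + j) :: T := by
  induction j with
  | zero => rfl
  | succ j ih => rw [pow_succ, run_mul, ih, run_fmy]; rfl

open Classical in
theorem stepX_succ_cons_cons (j d e : ℕ) (T : List ℕ) :
    stepX m ((j + 1) :: d :: e :: T) =
      if mPrec m (j + 1) d then 0 :: d :: e :: T else 0 :: (j + 1) :: d :: e :: T := rfl

theorem stepX_eq_nil_or (L : List ℕ) : stepX m L = [] ∨ ∃ d T, stepX m L = 0 :: d :: T := by
  match L with
  | [] => exact .inl rfl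
  | [j] => exact .inr ⟨j, [], rfl⟩
  | 0 :: d :: T => exact .inr ⟨d, T, rfl⟩
  | [j + 1, d] => exact .inr ⟨j + 1, [d], rfl⟩
  | (j + 1) :: d :: e :: T =>
      rw [stepX_succ_cons_cons]
      split_ifs
      exacts [.inr ⟨d, e :: T, rfl⟩, .inr ⟨j + 1, d :: e :: T, rfl⟩]

theorem stepX_stepX (L : List ℕ) : stepX m (stepX m L) = stepX m L := by
  rcases stepX_eq_nil_or m L with h | ⟨d, T, h⟩ <;> rw [h] <;> rfl

theorem stepX_singleton (j : ℕ) : stepX m [j] = [0, j] := rfl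

theorem stepX_cons_cons_of_not_mPrec {j d : ℕ} (hj : 1 ≤ j) (h : ¬ mPrec m j d) (T : List ℕ) :
    stepX m (j :: d :: T) = 0 :: j :: d :: T := by
  obtain ⟨j, rfl⟩ : ∃ i, j = i + 1 := ⟨j - 1, by omega⟩
  match T with
  | [] => rfl
  | e :: T => rw [stepX_succ_cons_cons, if_neg h]

theorem stepX_pair {j : ℕ} (hj : 1 ≤ j) (d : ℕ) : stepX m [j, d] = [0, j, d] := by
  obtain ⟨j, rfl⟩ : ∃ i, j = i + 1 := ⟨j - 1, by omega⟩
  rfl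

theorem run_eq_of_mPrec {j j' : ℕ} (hj' : 1 ≤ j') (h : mPrec m j' j) (d : ℕ) (T : List ℕ) :
    run m (0 :: d :: T) (fmy ^ j * fmx * fmy ^ j' * fmx) =
      run m (0 :: d :: T) (fmy ^ j * fmx) := by
  have hj : 1 ≤ j := by obtain ⟨k, -, hk, hkj⟩ := h; omega
  obtain ⟨j, rfl⟩ : ∃ i, j = i + 1 := ⟨j - 1, by omega⟩
  obtain ⟨j', rfl⟩ : ∃ i, j' = i + 1 := ⟨j' - 1, by omega⟩
  simp only [run_mul, run_fmy_pow, run_fmx, zero_add]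
  match T with
  | [] => rw [stepX_pair m hj, run_fmy_pow, zero_add, stepX_succ_cons_cons, if_pos h]
  | e :: T =>
      by_cases hd : mPrec m (j + 1) d
      · rw [stepX_succ_cons_cons, if_pos hd, run_fmy_pow, zero_add, stepX_succ_cons_cons,
          if_pos (mPrec_trans h hd)]
      · rw [stepX_succ_cons_cons, if_neg hd, run_fmy_pow, zero_add, stepX_succ_cons_cons,
          if_pos h]

def runCon : Con (FreeMonoid Bool) where
  r u v := ∀ L, run m L u = run m L v
  iseqv := ⟨fun _ _ => rfl, fun h L => (h L).symm, fun h₁ h₂ L => (h₁ L).trans (h₂ L)⟩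
  mul' h₁ h₂ L := by rw [run_mul, run_mul, h₁, h₂]

theorem conGen_le_runCon : conGen (smRel m) ≤ runCon m := by
  refine Con.conGen_le.mpr ?_
  rintro u v (⟨rfl, rfl⟩ | ⟨j, j', -, hj', h, rfl, rfl⟩) L
  · show run m L (fmx * fmx) = run m L fmx
    rw [run_mul, run_fmx, run_fmx, stepX_stepX]
  · show run m L (fmx * fmy ^ j * fmx * fmy ^ j' * fmx) = run m L (fmx * fmy ^ j * fmx)
    simp only [mul_assoc fmx, run_mul m L fmx, run_fmx]
    rcases stepX_eq_nil_or m L with hL | ⟨d, T, hL⟩ <;> rw [hL]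
    · rw [run_nil, run_nil]
    · exact run_eq_of_mPrec m hj' h d T

def weight (L : List ℕ) : ℕ := L.length + L.sum

theorem weight_cons (a : ℕ) (L : List ℕ) : weight (a :: L) = weight L + a + 1 := by
  simp only [weight, List.length_cons, List.sum_cons]
  omega

theorem weight_step_le (L : List ℕ) (b : Bool) : weight (step m L b) ≤ weight L + 1 := by
  match b, L with
  | false, [] | true, [] => exact Nat.zero_le _
  | false, j :: T => simp only [step, stepY, weight_cons]; omega
  | true, [j] => simp only [step, stepX, weight_cons]; omega
  | true, 0 :: d :: T => simp only [step, stepX]; omega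
  | true, [j + 1, d] => simp only [step, stepX, weight_cons]; omega
  | true, (j + 1) :: d :: e :: T =>
      simp only [step, stepX_succ_cons_cons]
      split_ifs <;> simp only [weight_cons] <;> omega

theorem weight_run_le (w : FreeMonoid Bool) (L : List ℕ) :
    weight (run m L w) ≤ weight L + w.length := by
  induction w using FreeMonoid.inductionOn' generalizing L with
  | one => simp [run]
  | of_mul b w ih =>
      rw [run_mul, run_of, FreeMonoid.length_mul, FreeMonoid.length_of]
      have := weight_step_le m L b
      exact (ih _).trans (by omega)

theorem run_fmx_fmy_pow {a : ℕ} {T : List ℕ} (hx : stepX m (a :: T) = 0 :: a :: T) (j : ℕ) :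
    run m (a :: T) (fmx * fmy ^ j) = j :: a :: T := by
  rw [run_mul, run_fmx, hx, run_fmy_pow, zero_add]

theorem run_fmx_nfWord (hmono : ∀ k, 1 ≤ k → m k < m (k + 1)) :
    ∀ {r : List ℕ}, r ≠ [] → ∀ {a : ℕ} {T : List ℕ}, stepX m (a :: T) = 0 :: a :: T →
      (∀ j ∈ r.dropLast, 1 ≤ j) → (a :: r.dropLast).IsChain (mPreceq m) →
      run m (a :: T) (fmx * nfWord r) = r.reverse ++ a :: T
  | [j], _, a, T, hx, _, _ => by
      rw [show nfWord [j] = fmy ^ j from rfl, run_fmx_fmy_pow m hx]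
      rfl
  | j :: j₁ :: r, _, a, T, hx, hpos, hchain => by
      have hpos' : ∀ i ∈ j :: (j₁ :: r).dropLast, 1 ≤ i := hpos
      have hchain' : (a :: j :: (j₁ :: r).dropLast).IsChain (mPreceq m) := hchain
      rw [List.isChain_cons_cons] at hchain'
      have hsplit : fmx * nfWord (j :: j₁ :: r) = fmx * fmy ^ j * (fmx * nfWord (j₁ :: r)) := by
        simp only [nfWord, mul_assoc]
      have hx' : stepX m (j :: a :: T) = 0 :: j :: a :: T :=
        stepX_cons_cons_of_not_mPrec m (hpos' j List.mem_cons_self)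
          (not_mPrec_of_mPreceq hmono hchain'.1) T
      rw [hsplit, run_mul, run_fmx_fmy_pow m hx, run_fmx_nfWord hmono (List.cons_ne_nil _ _) hx'
          (fun i hi => hpos' i (List.mem_cons_of_mem _ hi)) hchain'.2]
      simp

theorem run_nfWord (hmono : ∀ k, 1 ≤ k → m k < m (k + 1)) {l : List ℕ} (hl : isNF m l) :
    run m [0] (nfWord l) = l.reverse := by
  obtain ⟨hne, hpos, hchain⟩ := hl
  have hprefix (j₀ j₁ : ℕ) : run m [0] (fmy ^ j₀ * fmx * fmy ^ j₁) = [j₁, j₀] := by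
    rw [run_mul, run_mul, run_fmy_pow, run_fmx, stepX_singleton, run_fmy_pow, zero_add, zero_add]
  match l with
  | [] => exact absurd rfl hne
  | [j₀] => rw [show nfWord [j₀] = fmy ^ j₀ from rfl, run_fmy_pow, zero_add]; rfl
  | [j₀, j₁] => exact hprefix j₀ j₁
  | j₀ :: j₁ :: j₂ :: r =>
      have hpos' : ∀ i ∈ j₁ :: (j₂ :: r).dropLast, 1 ≤ i := hpos
      have hsplit : nfWord (j₀ :: j₁ :: j₂ :: r) =
          fmy ^ j₀ * fmx * fmy ^ j₁ * (fmx * nfWord (j₂ :: r)) := by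
        simp only [nfWord, mul_assoc]
      rw [hsplit, run_mul, hprefix, run_fmx_nfWord m hmono (List.cons_ne_nil _ _)
        (stepX_pair m (hpos' j₁ List.mem_cons_self) j₀)
        (fun i hi => hpos' i (List.mem_cons_of_mem _ hi)) hchain]
      simp

theorem length_fmy_pow (j : ℕ) : (fmy ^ j).length = j := by
  induction j with
  | zero => rfl
  | succ j ih => rw [pow_succ, FreeMonoid.length_mul, ih]; rfl

theorem length_nfWord : ∀ {l : List ℕ}, l ≠ [] → (nfWord l).length = l.length - 1 + l.sum
  | [j], _ => by simp [nfWord, length_fmy_pow]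
  | j :: j₁ :: r, _ => by
      rw [show nfWord (j :: j₁ :: r) = fmy ^ j * fmx * nfWord (j₁ :: r) from rfl,
        FreeMonoid.length_mul, FreeMonoid.length_mul, length_nfWord (List.cons_ne_nil _ _),
        length_fmy_pow]
      simp only [fmx, FreeMonoid.length_of, List.length_cons, List.sum_cons]
      omega

theorem length_add_sum_le_of_conGen (hmono : ∀ k, 1 ≤ k → m k < m (k + 1)) {l : List ℕ}
    (hl : isNF m l) {w : FreeMonoid Bool} (hw : conGen (smRel m) w (nfWord l)) :
    l.length + l.sum ≤ w.length + 1 := by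
  have hweight := weight_run_le m w [0]
  rw [conGen_le_runCon m hw [0], run_nfWord m hmono hl] at hweight
  simpa [weight, add_comm] using hweight

end SM

theorem stmt12_general (m : ℕ → ℕ) (hmono : ∀ k, 1 ≤ k → m k < m (k + 1))
    (l : List ℕ) (hl : isNF m l) :
    smLen m ((conGen (smRel m)).mk' (nfWord l)) = (l.length - 1) + l.sum := by
  have hlen := SM.length_nfWord hl.1
  refine le_antisymm (Nat.sInf_le ⟨nfWord l, hlen, rfl⟩) (le_csInf ⟨_, nfWord l, hlen, rfl⟩ ?_)
  rintro _ ⟨w, rfl, hw⟩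
  have := SM.length_add_sum_le_of_conGen m hmono hl ((Con.eq _).mp hw)
  have := List.length_pos_iff.mpr hl.1
  omega

/-- If `a ∈ S_m` has normal form `y^{j₀} x y^{j₁} x ⋯ y^{j_{t-1}} x y^{j_t}`,
then `|a| = t + j₀ + j₁ + ⋯ + j_t`. -/
theorem stmt12 (m : ℕ → ℕ) (hm1 : m 1 = 1) (hmono : ∀ k, 1 ≤ k → m k < m (k + 1))
    (l : List ℕ) (hl : isNF m l) :
    smLen m ((conGen (smRel m)).mk' (nfWord l)) = (l.length - 1) + l.sum :=
  stmt12_general m hmono l hl
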